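/- arXiv:1609.06229 — 8 statements merged into one kernel-verified Lean document; each statement's English description precedes it below -/
import Mathlib

section
/- Let G be a group and B a malnormal subgroup of G whose conjugates cover G. Then every finite subgroup of G is contained in some conjugate of B. -/
/-- A subgroup `B` of `G` is malnormal if for every `a ∉ B`,
`B ∩ a⁻¹Ba = {1}`, i.e. if `y ∈ B` and `a * y * a⁻¹ ∈ B` then `y = 1`. -/
def IsMalnormal {G : Type*} [Group G] (B : Subgroup G) : Prop :=
  ∀ a : G, a ∉ B → ∀ y : G, y ∈ B → a * y * a⁻¹ ∈ B → y = 1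

lemma malnormal_count {G : Type*} [Group G] (B : Subgroup G) (hmal : IsMalnormal B)
    (K : Subgroup G) (KS : Finset G) (hKS : ∀ x, x ∈ KS ↔ x ∈ K)
    (g x0 : G) (hx0K : x0 ∈ KS) (hx0 : x0 ≠ 1) (hgx0 : g * x0 * g⁻¹ ∈ B)
    (M : Finset G)
    (hM : ∀ x, x ∈ M ↔ x ∈ KS ∧ x ≠ 1 ∧ ∃ k ∈ KS, g * (k * x * k⁻¹) * g⁻¹ ∈ B) :
    ∃ hc : ℕ, 2 ≤ hc ∧ hc ≤ KS.card ∧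
      KS.card * (hc - 1) = M.card * hc ∧
      (hc = KS.card → ∀ x ∈ KS, g * x * g⁻¹ ∈ B) := by
  classical
  -- closure facts for KS
  have h1KS : (1 : G) ∈ KS := (hKS 1).mpr (one_mem K)
  have hmulKS : ∀ {x y : G}, x ∈ KS → y ∈ KS → x * y ∈ KS := fun hx hy =>
    (hKS _).mpr (mul_mem ((hKS _).mp hx) ((hKS _).mp hy))
  have hinvKS : ∀ {x : G}, x ∈ KS → x⁻¹ ∈ KS := fun hx =>
    (hKS _).mpr (inv_mem ((hKS _).mp hx))
  -- the conjugate predicate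
  set c : G → Prop := fun y => g * y * g⁻¹ ∈ B with hc_def
  have hc1 : c 1 := by
    show g * 1 * g⁻¹ ∈ B
    simpa using one_mem B
  have hcmul : ∀ {y z : G}, c y → c z → c (y * z) := by
    intro y z hy hz
    show g * (y * z) * g⁻¹ ∈ B
    have h : g * (y * z) * g⁻¹ = (g * y * g⁻¹) * (g * z * g⁻¹) := by group
    rw [h]; exact mul_mem hy hz
  have hcinv : ∀ {y : G}, c y → c y⁻¹ := by
    intro y hy
    show g * y⁻¹ * g⁻¹ ∈ B
    have h : g * y⁻¹ * g⁻¹ = (g * y * g⁻¹)⁻¹ := by group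
    rw [h]; exact inv_mem hy
  have key : ∀ a y : G, ¬ c a → c y → c (a * y * a⁻¹) → y = 1 := by
    intro a y ha hy hay
    have h1 : (g * a * g⁻¹) * (g * y * g⁻¹) * (g * a * g⁻¹)⁻¹ = g * (a * y * a⁻¹) * g⁻¹ := by
      group
    have h2 : g * y * g⁻¹ = 1 :=
      hmal (g * a * g⁻¹) ha (g * y * g⁻¹) hy (by rw [h1]; exact hay)
    have h3 : y = g⁻¹ * (g * y * g⁻¹) * g := by group
    rw [h2] at h3
    simpa using h3
  -- conjugation by nonzero elt kills 1 test
  have conj_ne_one : ∀ {k x : G}, x ≠ 1 → k * x * k⁻¹ ≠ 1 := by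
    intro k x hx h
    apply hx
    have : x = k⁻¹ * (k * x * k⁻¹) * k := by group
    rw [this, h]; group
  set HS : Finset G := KS.filter c with hHS_def
  have hHSsub : HS ⊆ KS := Finset.filter_subset _ _
  have h1HS : (1 : G) ∈ HS := Finset.mem_filter.mpr ⟨h1KS, hc1⟩
  have hx0HS : x0 ∈ HS := Finset.mem_filter.mpr ⟨hx0K, hgx0⟩
  have hHS2 : 2 ≤ HS.card := Finset.one_lt_card.mpr ⟨x0, hx0HS, 1, h1HS, hx0⟩
  set T : Finset (G × G) :=
    (KS ×ˢ KS).filter (fun p => p.2 ≠ 1 ∧ c (p.1 * p.2 * p.1⁻¹)) with hT_def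
  -- first count
  have count1 : T.card = KS.card * (HS.card - 1) := by
    have hfib : T.card = ∑ k ∈ KS, (T.filter (fun p => p.1 = k)).card :=
      Finset.card_eq_sum_card_fiberwise (fun p hp =>
        (Finset.mem_product.mp (Finset.mem_filter.mp hp).1).1)
    rw [hfib]
    have heach : ∀ k ∈ KS, (T.filter (fun p => p.1 = k)).card = HS.card - 1 := by
      intro k hk
      rw [← Finset.card_erase_of_mem h1HS]
      apply Finset.card_bij (fun p _ => k * p.2 * k⁻¹)
      · intro p hp
        simp only [hT_def, Finset.mem_filter, Finset.mem_product] at hp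
        obtain ⟨⟨⟨hp1, hp2⟩, hne, hcp⟩, hfst⟩ := hp
        subst hfst
        refine Finset.mem_erase.mpr ⟨conj_ne_one hne, Finset.mem_filter.mpr ⟨?_, hcp⟩⟩
        exact hmulKS (hmulKS hp1 hp2) (hinvKS hp1)
      · intro p hp q hq hpq
        simp only [hT_def, Finset.mem_filter, Finset.mem_product] at hp hq
        have h2 : p.2 = q.2 := by
          have := hpq
          have : k⁻¹ * (k * p.2 * k⁻¹) * k = k⁻¹ * (k * q.2 * k⁻¹) * k := by rw [hpq]
          simpa [mul_assoc] using this
        have h1 : p.1 = q.1 := hp.2.trans hq.2.symm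
        exact Prod.ext h1 h2
      · intro z hz
        obtain ⟨hzne, hzHS⟩ := Finset.mem_erase.mp hz
        obtain ⟨hzKS, hcz⟩ := Finset.mem_filter.mp hzHS
        refine ⟨(k, k⁻¹ * z * k), ?_, by group⟩
        simp only [hT_def, Finset.mem_filter, Finset.mem_product]
        refine ⟨⟨⟨hk, hmulKS (hmulKS (hinvKS hk) hzKS) hk⟩, ?_, ?_⟩, trivial⟩
        · simpa using @conj_ne_one k⁻¹ z hzne
        · have h : k * (k⁻¹ * z * k) * k⁻¹ = z := by group
          rw [h]; exact hcz
    rw [Finset.sum_congr rfl heach, Finset.sum_const, smul_eq_mul]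
  -- second count
  have count2 : T.card = M.card * HS.card := by
    have hfib : T.card = ∑ x ∈ KS, (T.filter (fun p => p.2 = x)).card :=
      Finset.card_eq_sum_card_fiberwise (fun p hp =>
        (Finset.mem_product.mp (Finset.mem_filter.mp hp).1).2)
    rw [hfib]
    have hMsub : M ⊆ KS := fun x hx => ((hM x).mp hx).1
    rw [← Finset.sum_subset hMsub]
    · have heach : ∀ x ∈ M, (T.filter (fun p => p.2 = x)).card = HS.card := by
        intro x hx
        obtain ⟨hxKS, hxne, k0, hk0KS, hk0⟩ := (hM x).mp hx
        have hck0 : c (k0 * x * k0⁻¹) := hk0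
        apply Finset.card_bij (fun p _ => p.1 * k0⁻¹)
        · intro p hp
          simp only [hT_def, Finset.mem_filter, Finset.mem_product] at hp
          obtain ⟨⟨⟨hp1, hp2⟩, hne, hcp⟩, hsnd⟩ := hp
          refine Finset.mem_filter.mpr ⟨hmulKS hp1 (hinvKS hk0KS), ?_⟩
          by_contra ha
          have h1 : (p.1 * k0⁻¹) * (k0 * x * k0⁻¹) * (p.1 * k0⁻¹)⁻¹ = p.1 * x * p.1⁻¹ := by
            group
          have := key (p.1 * k0⁻¹) (k0 * x * k0⁻¹) ha hck0 (by rw [h1]; rw [← hsnd] at *; exact hcp)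
          exact conj_ne_one hxne this
        · intro p hp q hq hpq
          simp only [hT_def, Finset.mem_filter, Finset.mem_product] at hp hq
          have h1 : p.1 = q.1 := by
            have := mul_right_cancel hpq
            exact this
          exact Prod.ext h1 (hp.2.trans hq.2.symm)
        · intro z hz
          obtain ⟨hzKS, hcz⟩ := Finset.mem_filter.mp hz
          refine ⟨(z * k0, x), ?_, by group⟩
          simp only [hT_def, Finset.mem_filter, Finset.mem_product]
          refine ⟨⟨⟨hmulKS hzKS hk0KS, hxKS⟩, hxne, ?_⟩, trivial⟩
          have h : (z * k0) * x * (z * k0)⁻¹ = z * (k0 * x * k0⁻¹) * z⁻¹ := by group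
          rw [h]
          exact hcmul (hcmul hcz hck0) (hcinv hcz)
      rw [Finset.sum_congr rfl heach, Finset.sum_const, smul_eq_mul]
    · intro x hxKS hxM
      rw [Finset.card_eq_zero]
      by_contra hne
      obtain ⟨p, hp⟩ := Finset.nonempty_of_ne_empty hne
      simp only [hT_def, Finset.mem_filter, Finset.mem_product] at hp
      obtain ⟨⟨⟨hp1, hp2⟩, hpne, hcp⟩, hsnd⟩ := hp
      exact hxM ((hM x).mpr ⟨hxKS, by rw [← hsnd]; exact hpne,
        p.1, hp1, by rw [← hsnd]; exact hcp⟩)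
  refine ⟨HS.card, hHS2, Finset.card_le_card hHSsub, by rw [← count1, count2], ?_⟩
  intro hcard x hx
  have : HS = KS := Finset.eq_of_subset_of_card_le hHSsub (le_of_eq hcard.symm)
  have : x ∈ HS := this ▸ hx
  exact (Finset.mem_filter.mp this).2

lemma nat_half {n m h : ℕ} (h2 : 2 ≤ h) (e : n * (h - 1) = m * h) : n ≤ 2 * m := by
  have hmul : n * h ≤ (2 * m) * h := by
    calc n * h ≤ n * (2 * (h - 1)) := Nat.mul_le_mul_left n (by omega)
    _ = 2 * (n * (h - 1)) := by ring
    _ = 2 * (m * h) := by rw [e]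
    _ = (2 * m) * h := by ring
  exact Nat.le_of_mul_le_mul_right hmul (by omega)

lemma nat_eq {n m h : ℕ} (h2 : 2 ≤ h) (hn : 1 ≤ n) (e : n * (h - 1) = m * h)
    (hm : m = n - 1) : h = n := by
  obtain ⟨h', rfl⟩ : ∃ h', h = h' + 1 := ⟨h - 1, by omega⟩
  obtain ⟨n', rfl⟩ : ∃ n', n = n' + 1 := ⟨n - 1, by omega⟩
  have hm' : m = n' := by omega
  subst hm'
  simp only [Nat.add_sub_cancel] at e
  have e1 : (m + 1) * h' = m * h' + h' := by ring
  have e2 : m * (h' + 1) = m * h' + m := by ring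
  have : h' = m := by linarith
  omega

/-- If the conjugates of a malnormal subgroup `B` cover `G`, then every
finite subgroup of `G` is contained in some conjugate of `B`. -/
theorem stmt_5 {G : Type*} [Group G] (B : Subgroup G)
    (hmal : IsMalnormal B)
    (hcover : ∀ g : G, ∃ h : G, h * g * h⁻¹ ∈ B)
    (K : Subgroup G) (hK : (K : Set G).Finite) :
    ∃ h : G, K ≤ B.map (MulAut.conj h⁻¹).toMonoidHom := by
  classical
  by_cases htriv : ∀ x : G, x ∈ K → x = 1
  · refine ⟨1, fun x hx => ?_⟩
    rw [htriv x hx]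
    exact Subgroup.one_mem _
  push_neg at htriv
  obtain ⟨x0, hx0K, hx0ne⟩ := htriv
  set KS : Finset G := hK.toFinset with hKSdef
  have hKS : ∀ x, x ∈ KS ↔ x ∈ K := fun x => hK.mem_toFinset
  have h1KS : (1 : G) ∈ KS := (hKS 1).mpr (one_mem K)
  have hx0KS : x0 ∈ KS := (hKS x0).mpr hx0K
  have hn2 : 2 ≤ KS.card := Finset.one_lt_card.mpr ⟨x0, hx0KS, 1, h1KS, hx0ne⟩
  obtain ⟨g, hg⟩ := hcover x0
  set M : Finset G :=
    KS.filter (fun x => x ≠ 1 ∧ ∃ k ∈ KS, g * (k * x * k⁻¹) * g⁻¹ ∈ B) with hMdef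
  have hM : ∀ x, x ∈ M ↔ x ∈ KS ∧ x ≠ 1 ∧ ∃ k ∈ KS, g * (k * x * k⁻¹) * g⁻¹ ∈ B :=
    fun x => by rw [hMdef, Finset.mem_filter]
  obtain ⟨hc, hhc2, hhcle, heq, hfull⟩ :=
    malnormal_count B hmal K KS hKS g x0 hx0KS hx0ne hg M hM
  have hMsub : M ⊆ KS.erase 1 := by
    intro x hx
    obtain ⟨hxKS, hxne, _⟩ := (hM x).mp hx
    exact Finset.mem_erase.mpr ⟨hxne, hxKS⟩
  have hcard_erase : (KS.erase 1).card = KS.card - 1 := Finset.card_erase_of_mem h1KS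
  have hMle : M.card ≤ KS.card - 1 := hcard_erase ▸ Finset.card_le_card hMsub
  by_cases hm : M.card = KS.card - 1
  · -- everything is conjugate into C, so K = H ⊆ C
    have hc_eq : hc = KS.card := nat_eq hhc2 (by omega) heq hm
    have hall := hfull hc_eq
    refine ⟨g, fun x hx => ?_⟩
    have hxB : g * x * g⁻¹ ∈ B := hall x ((hKS x).mpr hx)
    rw [Subgroup.mem_map]
    refine ⟨g * x * g⁻¹, hxB, ?_⟩
    show (MulAut.conj g⁻¹) (g * x * g⁻¹) = x
    rw [MulAut.conj_apply]
    group
  · -- two disjoint "covered" sets, counting contradiction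
    exfalso
    have hmlt : M.card < KS.card - 1 := lt_of_le_of_ne hMle hm
    -- find y not covered
    have hy : ∃ y ∈ KS.erase 1, y ∉ M := by
      by_contra hno
      push_neg at hno
      have : KS.erase 1 ⊆ M := fun y hy => hno y hy
      have := Finset.card_le_card this
      omega
    obtain ⟨y, hyE, hyM⟩ := hy
    obtain ⟨hyne, hyKS⟩ := Finset.mem_erase.mp hyE
    obtain ⟨g', hg'⟩ := hcover y
    set M' : Finset G :=
      KS.filter (fun x => x ≠ 1 ∧ ∃ k ∈ KS, g' * (k * x * k⁻¹) * g'⁻¹ ∈ B) with hM'def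
    have hM' : ∀ x, x ∈ M' ↔ x ∈ KS ∧ x ≠ 1 ∧ ∃ k ∈ KS, g' * (k * x * k⁻¹) * g'⁻¹ ∈ B :=
      fun x => by rw [hM'def, Finset.mem_filter]
    obtain ⟨hc', hhc2', hhcle', heq', _⟩ :=
      malnormal_count B hmal K KS hKS g' y hyKS hyne hg' M' hM'
    have hM'sub : M' ⊆ KS.erase 1 := by
      intro x hx
      obtain ⟨hxKS, hxne, _⟩ := (hM' x).mp hx
      exact Finset.mem_erase.mpr ⟨hxne, hxKS⟩
    -- disjointness
    have hdisj : Disjoint M M' := by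
      rw [Finset.disjoint_left]
      intro x hxM hxM'
      obtain ⟨hxKS, hxne, k, hkKS, hk⟩ := (hM x).mp hxM
      obtain ⟨_, _, k', hk'KS, hk'⟩ := (hM' x).mp hxM'
      -- a := (g*k) * (g'*k')⁻¹ must lie in B
      have haB : (g * k) * (g' * k')⁻¹ ∈ B := by
        by_contra ha
        have hy1 : (g' * k') * x * (g' * k')⁻¹ ∈ B := by
          have h : (g' * k') * x * (g' * k')⁻¹ = g' * (k' * x * k'⁻¹) * g'⁻¹ := by group
          rw [h]; exact hk'
        have hy2 : ((g * k) * (g' * k')⁻¹) * ((g' * k') * x * (g' * k')⁻¹) *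
            ((g * k) * (g' * k')⁻¹)⁻¹ ∈ B := by
          have h : ((g * k) * (g' * k')⁻¹) * ((g' * k') * x * (g' * k')⁻¹) *
              ((g * k) * (g' * k')⁻¹)⁻¹ = g * (k * x * k⁻¹) * g⁻¹ := by group
          rw [h]; exact hk
        have := hmal _ ha _ hy1 hy2
        apply hxne
        have hxe : x = (g' * k')⁻¹ * ((g' * k') * x * (g' * k')⁻¹) * (g' * k') := by group
        rw [this] at hxe
        simpa [mul_assoc] using hxe
      -- then y is conjugate into C via k * k'⁻¹, contradiction
      apply hyM
      refine (hM y).mpr ⟨hyKS, hyne, k * k'⁻¹, ?_, ?_⟩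
      · exact (hKS _).mpr (mul_mem ((hKS _).mp hkKS) (inv_mem ((hKS _).mp hk'KS)))
      · have h : g * ((k * k'⁻¹) * y * (k * k'⁻¹)⁻¹) * g⁻¹ =
            ((g * k) * (g' * k')⁻¹) * (g' * y * g'⁻¹) * ((g * k) * (g' * k')⁻¹)⁻¹ := by
          group
        rw [h]
        exact mul_mem (mul_mem haB hg') (inv_mem haB)
    have hunion : M.card + M'.card ≤ KS.card - 1 := by
      rw [← Finset.card_union_of_disjoint hdisj]
      calc (M ∪ M').card ≤ (KS.erase 1).card :=
            Finset.card_le_card (Finset.union_subset hMsub hM'sub)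
        _ = KS.card - 1 := hcard_erase
    have h2m : KS.card ≤ 2 * M.card := nat_half hhc2 heq
    have h2m' : KS.card ≤ 2 * M'.card := nat_half hhc2' heq'
    omega
end

section
/- Let G be a group and B a proper malnormal subgroup of G (B ≠ G) whose conjugates cover G. Then G has no involutions: there is no element g ∈ G with g ≠ 1 and g² = 1. -/
/-- If `B` is a proper malnormal subgroup of `G` whose conjugates cover `G`,
then `G` has no involutions. -/
theorem stmt_6 {G : Type*} [Group G] (B : Subgroup G)
    (hmal : IsMalnormal B) (htop : B ≠ ⊤)
    (hcover : ∀ g : G, ∃ h : G, h * g * h⁻¹ ∈ B) :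
    ¬ ∃ g : G, g ≠ 1 ∧ g ^ 2 = 1 := by
  rintro ⟨g, hg1, hg2⟩
  -- conjugate g into B
  obtain ⟨h, hh⟩ := hcover g
  set t : G := h * g * h⁻¹ with ht_def
  have htB : t ∈ B := hh
  have ht1 : t ≠ 1 := by
    intro h1
    apply hg1
    have hgt : g = h⁻¹ * t * h := by rw [ht_def]; group
    rw [hgt, h1]; group
  have ht2 : t * t = 1 := by
    have e : t * t = h * (g * g) * h⁻¹ := by rw [ht_def]; group
    have e2 : g * g = 1 := by rw [← pow_two]; exact hg2
    rw [e, e2]; group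
  have hti : t⁻¹ = t := inv_eq_of_mul_eq_one_left ht2
  -- pick a ∉ B
  obtain ⟨a, ha⟩ : ∃ a : G, a ∉ B := by
    by_contra hc
    push_neg at hc
    exact htop (Subgroup.eq_top_iff' B |>.mpr hc)
  set s : G := a * t * a⁻¹ with hs_def
  have hs2 : s * s = 1 := by
    have e : s * s = a * (t * t) * a⁻¹ := by rw [hs_def]; group
    rw [e, ht2]; group
  have hsi : s⁻¹ = s := inv_eq_of_mul_eq_one_left hs2
  have hsB : s ∉ B := fun hsB => ht1 (hmal a ha t htB hsB)
  set u : G := t * s with hu_def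
  have hu1 : u ≠ 1 := by
    intro h1
    apply hsB
    have e : s = t⁻¹ * u := by rw [hu_def]; group
    rw [e, h1, mul_one, hti]
    exact htB
  have htut : t * u * t⁻¹ = u⁻¹ := by
    have e : t * u * t⁻¹ = t * t * (s * t⁻¹) := by rw [hu_def]; group
    have e3 : u * (s * t⁻¹) = 1 := by
      have e4 : u * (s * t⁻¹) = t * (s * s) * t⁻¹ := by rw [hu_def]; group
      rw [e4, hs2]; group
    rw [e, ht2, one_mul]
    exact (inv_eq_of_mul_eq_one_right e3).symm
  obtain ⟨k, hk⟩ := hcover u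
  set v : G := k * u * k⁻¹ with hv_def
  have hvB : v ∈ B := hk
  have hv1 : v ≠ 1 := by
    intro h1
    apply hu1
    have e : u = k⁻¹ * v * k := by rw [hv_def]; group
    rw [e, h1]; group
  set w : G := k * t * k⁻¹ with hw_def
  have hwvw : w * v * w⁻¹ = v⁻¹ := by
    have e : w * v * w⁻¹ = k * (t * u * t⁻¹) * k⁻¹ := by rw [hw_def, hv_def]; group
    rw [e, htut, hv_def]; group
  have hwB : w ∈ B := by
    by_contra hwB
    exact hv1 (hmal w hwB v hvB (hwvw ▸ B.inv_mem hvB))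
  by_cases hkB : k ∈ B
  · -- then u ∈ B, so s ∈ B, contradiction
    apply hsB
    have huB : u ∈ B := by
      have e : u = k⁻¹ * v * k := by rw [hv_def]; group
      rw [e]
      exact B.mul_mem (B.mul_mem (B.inv_mem hkB) hvB) hkB
    have e : s = t⁻¹ * u := by rw [hu_def]; group
    rw [e]
    exact B.mul_mem (B.inv_mem htB) huB
  · -- k⁻¹ ∉ B, k⁻¹ * w * k = t ∈ B, malnormal gives w = 1, so t = 1
    have hkiB : k⁻¹ ∉ B := fun hm => hkB (by simpa using B.inv_mem hm)
    have e : k⁻¹ * w * (k⁻¹)⁻¹ = t := by rw [hw_def]; group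
    have hw1 : w = 1 := hmal k⁻¹ hkiB w hwB (e ▸ htB)
    apply ht1
    have e2 : t = k⁻¹ * w * k := by rw [hw_def]; group
    rw [e2, hw1]; group
end

section
/- Let G be a group with unique square roots and σ an involutive automorphism of G. Set F = {g ∈ G : σ(g) = g} and I = {g ∈ G : σ(g) = g⁻¹}. Then G = F·I and G = I·F: every g ∈ G can be written as g = f·i with f ∈ F and i ∈ I, and also as g = i'·f' with i' ∈ I and f' ∈ F. -/
/-- In a group with unique square roots, with an involutive automorphism `σ`,
setting `F = {g : σ(g) = g}` and `I = {g : σ(g) = g⁻¹}`, one has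
`G = F·I = I·F`. -/
theorem stmt_10 {G : Type*} [Group G]
    (husq : ∀ g : G, ∃! h : G, h ^ 2 = g)
    (σ : G ≃* G) (hinv : ∀ g : G, σ (σ g) = g) (g : G) :
    (∃ f i : G, σ f = f ∧ σ i = i⁻¹ ∧ g = f * i) ∧
      (∃ i f : G, σ i = i⁻¹ ∧ σ f = f ∧ g = i * f) := by
  constructor
  · obtain ⟨i, hi, _⟩ := husq ((σ g)⁻¹ * g)
    obtain ⟨j, _, hju⟩ := husq (g⁻¹ * σ g)
    have hσi : σ i ^ 2 = g⁻¹ * σ g := by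
      rw [← map_pow, hi, map_mul, map_inv, hinv]
    have hinvi : (i⁻¹) ^ 2 = g⁻¹ * σ g := by
      rw [inv_pow, hi, mul_inv_rev, inv_inv]
    have hii : σ i = i⁻¹ := by rw [hju _ hσi, hju _ hinvi]
    refine ⟨g * i⁻¹, i, ?_, hii, by group⟩
    rw [map_mul, map_inv, hii, inv_inv]
    rw [eq_mul_inv_iff_mul_eq, mul_assoc, ← sq, hi, mul_inv_cancel_left]
  · obtain ⟨i, hi, _⟩ := husq (g * (σ g)⁻¹)
    obtain ⟨j, _, hju⟩ := husq (σ g * g⁻¹)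
    have hσi : σ i ^ 2 = σ g * g⁻¹ := by
      rw [← map_pow, hi, map_mul, map_inv, hinv]
    have hinvi : (i⁻¹) ^ 2 = σ g * g⁻¹ := by
      rw [inv_pow, hi, mul_inv_rev, inv_inv]
    have hii : σ i = i⁻¹ := by rw [hju _ hσi, hju _ hinvi]
    refine ⟨i, i⁻¹ * g, hii, ?_, by group⟩
    rw [map_mul, map_inv, hii, inv_inv]
    rw [eq_comm, inv_mul_eq_iff_eq_mul, ← mul_assoc, ← sq, hi,
      inv_mul_cancel_right]
end

section
/- Let G be a group with unique square roots and σ an involutive automorphism of G. Set F = {g ∈ G : σ(g) = g} and I = {g ∈ G : σ(g) = g⁻¹}. Then no nontrivial element of F has a conjugate in I: if f ∈ F with f ≠ 1, then for every g ∈ G, g⁻¹fg ∉ I. -/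
/-- In a group with unique square roots, with an involutive automorphism `σ`,
no nontrivial fixed point of `σ` has a conjugate inverted by `σ`. -/
theorem stmt_12 {G : Type*} [Group G]
    (husq : ∀ g : G, ∃! h : G, h ^ 2 = g)
    (σ : G ≃* G) (hinv : ∀ g : G, σ (σ g) = g)
    (f : G) (hf : σ f = f) (hf1 : f ≠ 1) (g : G) :
    ¬ σ (g⁻¹ * f * g) = (g⁻¹ * f * g)⁻¹ := by
  intro h
  set t : G := σ g * g⁻¹ with ht
  have h1 : (σ g)⁻¹ * f * σ g = g⁻¹ * f⁻¹ * g := by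
    simpa [map_mul, map_inv, hf, mul_inv_rev, mul_assoc] using h
  have h2 : f * t = t * f⁻¹ := by
    have := congrArg (fun x => σ g * x * g⁻¹) h1
    simpa [ht, mul_assoc] using this
  have h3 : (t * f) ^ 2 = t ^ 2 := by
    have : t * (f * t) * f = t * t := by
      rw [h2]; simp [mul_assoc]
    calc (t * f) ^ 2 = t * (f * t) * f := by simp [pow_two, mul_assoc]
      _ = t ^ 2 := by rw [this, pow_two]
  have h4 : t * f = t := (husq (t ^ 2)).unique h3 rfl
  exact hf1 (by simpa using h4)
end

section
/- Let G be a group and B a malnormal subgroup of G. Then two distinct lines intersect in at most one point: if ℓ₁ = u₁Bv₁ and ℓ₂ = u₂Bv₂ are lines with ℓ₁ ≠ ℓ₂ (as subsets of G), then ℓ₁ ∩ ℓ₂ contains at most one element. -/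
/-- A line (with respect to `B`) is a two-sided translate `uBv` of `B`. -/
def IsLine {G : Type*} [Group G] (B : Subgroup G) (ℓ : Set G) : Prop :=
  ∃ u v : G, ℓ = (fun b => u * b * v) '' (B : Set G)

/-- Two distinct lines meet in at most one point. -/
theorem stmt_13 {G : Type*} [Group G] (B : Subgroup G)
    (hmal : IsMalnormal B)
    (ℓ₁ ℓ₂ : Set G) (h₁ : IsLine B ℓ₁) (h₂ : IsLine B ℓ₂) (hne : ℓ₁ ≠ ℓ₂) :
    (ℓ₁ ∩ ℓ₂).Subsingleton := by
  obtain ⟨u₁, v₁, rfl⟩ := h₁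
  obtain ⟨u₂, v₂, rfl⟩ := h₂
  intro x hx y hy
  by_contra hxy
  obtain ⟨⟨b₁, hb₁, hxb₁⟩, ⟨b₂, hb₂, hxb₂⟩⟩ := hx
  obtain ⟨⟨c₁, hc₁, hyc₁⟩, ⟨c₂, hc₂, hyc₂⟩⟩ := hy
  simp only at hxb₁ hxb₂ hyc₁ hyc₂
  have hbc₁ : b₁ * c₁⁻¹ ≠ 1 := by
    intro h
    exact hxy (by rw [← hxb₁, ← hyc₁, mul_inv_eq_one.mp h])
  have hbc₂ : c₁⁻¹ * b₁ ≠ 1 := by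
    intro h
    apply hbc₁
    rw [(inv_mul_eq_one.mp h).symm]; group
  have hb₂eq : b₂ = u₂⁻¹ * u₁ * b₁ * v₁ * v₂⁻¹ := by
    have h : u₂ * b₂ * v₂ = u₁ * b₁ * v₁ := hxb₂.trans hxb₁.symm
    calc b₂ = u₂⁻¹ * (u₂ * b₂ * v₂) * v₂⁻¹ := by group
    _ = u₂⁻¹ * (u₁ * b₁ * v₁) * v₂⁻¹ := by rw [h]
    _ = u₂⁻¹ * u₁ * b₁ * v₁ * v₂⁻¹ := by group
  have hc₂eq : c₂ = u₂⁻¹ * u₁ * c₁ * v₁ * v₂⁻¹ := by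
    have h : u₂ * c₂ * v₂ = u₁ * c₁ * v₁ := hyc₂.trans hyc₁.symm
    calc c₂ = u₂⁻¹ * (u₂ * c₂ * v₂) * v₂⁻¹ := by group
    _ = u₂⁻¹ * (u₁ * c₁ * v₁) * v₂⁻¹ := by rw [h]
    _ = u₂⁻¹ * u₁ * c₁ * v₁ * v₂⁻¹ := by group
  have hconj1 : (u₂⁻¹ * u₁) * (b₁ * c₁⁻¹) * (u₂⁻¹ * u₁)⁻¹ = b₂ * c₂⁻¹ := by
    rw [hb₂eq, hc₂eq]; group
  have hconj2 : (v₂ * v₁⁻¹) * (c₁⁻¹ * b₁) * (v₂ * v₁⁻¹)⁻¹ = c₂⁻¹ * b₂ := by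
    rw [hb₂eq, hc₂eq]; group
  have haB : u₂⁻¹ * u₁ ∈ B := by
    by_contra haB
    exact hbc₁ (hmal _ haB _ (B.mul_mem hb₁ (B.inv_mem hc₁))
      (hconj1 ▸ B.mul_mem hb₂ (B.inv_mem hc₂)))
  have hdB : v₂ * v₁⁻¹ ∈ B := by
    by_contra hdB
    exact hbc₂ (hmal _ hdB _ (B.mul_mem (B.inv_mem hc₁) hb₁)
      (hconj2 ▸ B.mul_mem (B.inv_mem hc₂) hb₂))
  apply hne
  ext z
  constructor
  · rintro ⟨b, hb, rfl⟩
    exact ⟨(u₂⁻¹ * u₁) * b * (v₂ * v₁⁻¹)⁻¹,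
      B.mul_mem (B.mul_mem haB hb) (B.inv_mem hdB), by simp only; group⟩
  · rintro ⟨b, hb, rfl⟩
    exact ⟨(u₂⁻¹ * u₁)⁻¹ * b * (v₂ * v₁⁻¹),
      B.mul_mem (B.mul_mem (B.inv_mem haB) hb) hdB, by simp only; group⟩
end

section
/- Let G be a group and B a malnormal subgroup of G whose conjugates cover G. Then through any two distinct points passes exactly one line: for all u, v ∈ G with u ≠ v, there exists a unique line containing both u and v. -/
/-- If `B` is malnormal and its conjugates cover `G`, then through any two
distinct points passes exactly one line. -/
theorem stmt_14 {G : Type*} [Group G] (B : Subgroup G)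
    (hmal : IsMalnormal B)
    (hcover : ∀ g : G, ∃ h : G, h * g * h⁻¹ ∈ B)
    (u v : G) (huv : u ≠ v) :
    ∃! ℓ : Set G, IsLine B ℓ ∧ u ∈ ℓ ∧ v ∈ ℓ := by
  -- canonical form: any line through `u` is `u g⁻¹ B g` for some `g`
  have key : ∀ ℓ : Set G, IsLine B ℓ → u ∈ ℓ →
      ∃ g : G, ℓ = (fun b => u * g⁻¹ * b * g) '' (B : Set G) := by
    rintro ℓ ⟨a, c, rfl⟩ ⟨b, hb, hub⟩
    simp only at hub
    refine ⟨c, ?_⟩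
    ext x
    simp only [Set.mem_image]
    constructor
    · rintro ⟨d, hd, rfl⟩
      exact ⟨b⁻¹ * d, mul_mem (inv_mem hb) hd, by rw [← hub]; group⟩
    · rintro ⟨d, hd, rfl⟩
      exact ⟨b * d, mul_mem hb hd, by rw [← hub]; group⟩
  obtain ⟨h, hh⟩ := hcover (v * u⁻¹)
  refine ⟨(fun b => h⁻¹ * b * (h * u)) '' (B : Set G),
    ⟨⟨h⁻¹, h * u, rfl⟩, ⟨1, one_mem _, by group⟩,
      ⟨h * (v * u⁻¹) * h⁻¹, hh, by group⟩⟩, ?_⟩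
  rintro ℓ' ⟨hline', hu', hv'⟩
  obtain ⟨g₁, hg₁⟩ := key ℓ' hline' hu'
  obtain ⟨g₂, hg₂⟩ := key _ ⟨h⁻¹, h * u, rfl⟩ ⟨1, one_mem _, by group⟩
  have hw1 : g₁ * (u⁻¹ * v) * g₁⁻¹ ∈ B := by
    rw [hg₁] at hv'
    obtain ⟨b, hb, hbv⟩ := hv'
    simp only at hbv
    have : g₁ * (u⁻¹ * v) * g₁⁻¹ = b := by rw [← hbv]; group
    rwa [this]
  have hw2 : g₂ * (u⁻¹ * v) * g₂⁻¹ ∈ B := by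
    have hv2 : v ∈ (fun b => u * g₂⁻¹ * b * g₂) '' (B : Set G) := by
      rw [← hg₂]; exact ⟨h * (v * u⁻¹) * h⁻¹, hh, by group⟩
    obtain ⟨b, hb, hbv⟩ := hv2
    simp only at hbv
    have : g₂ * (u⁻¹ * v) * g₂⁻¹ = b := by rw [← hbv]; group
    rwa [this]
  have hw : u⁻¹ * v ≠ 1 := by
    intro h1
    exact huv (by rw [← mul_one u, ← h1]; group)
  have ha : g₂ * g₁⁻¹ ∈ B := by
    by_contra hab
    have := hmal _ hab _ hw1 (by
      have : g₂ * g₁⁻¹ * (g₁ * (u⁻¹ * v) * g₁⁻¹) * (g₂ * g₁⁻¹)⁻¹ =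
          g₂ * (u⁻¹ * v) * g₂⁻¹ := by group
      rw [this]; exact hw2)
    apply hw
    have heq : u⁻¹ * v = g₁⁻¹ * (g₁ * (u⁻¹ * v) * g₁⁻¹) * g₁ := by group
    rw [heq, this]
    group
  -- conclude ℓ' = the chosen line
  rw [hg₁, hg₂]
  ext x
  simp only [Set.mem_image]
  constructor
  · rintro ⟨d, hd, rfl⟩
    refine ⟨(g₂ * g₁⁻¹) * d * (g₂ * g₁⁻¹)⁻¹, mul_mem (mul_mem ha hd) (inv_mem ha), by group⟩
  · rintro ⟨d, hd, rfl⟩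
    refine ⟨(g₂ * g₁⁻¹)⁻¹ * d * (g₂ * g₁⁻¹), mul_mem (mul_mem (inv_mem ha) hd) ha, by group⟩
end

section
/- Let G be a group and B an abelian malnormal subgroup of G whose conjugates cover G. Let x, y ∈ G with [x,y] = x⁻¹y⁻¹xy ≠ 1, and let B(x) denote the unique conjugate of B containing x. Then for all b, b' ∈ B(x) with b ≠ b', the elements by and b'y are nontrivial and lie in distinct conjugates of B (i.e., no conjugate of B contains both by and b'y). -/
lemma mem_conj_aux {G : Type*} [Group G] (B : Subgroup G) (h z : G) :
    z ∈ B.map (MulAut.conj h⁻¹).toMonoidHom ↔ h * z * h⁻¹ ∈ B := by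
  constructor
  · rintro ⟨c, hc, rfl⟩
    simpa [MulAut.conj, mul_assoc] using hc
  · intro hz
    exact ⟨h * z * h⁻¹, hz, by simp [MulAut.conj]; group⟩

/-- Let `B` be an abelian malnormal subgroup of `G` whose conjugates cover
`G`, and let `x, y ∈ G` with `[x,y] ≠ 1`. If `K` is the conjugate of `B`
containing `x`, then for distinct `b, b' ∈ K`, the elements `b*y` and `b'*y`
are nontrivial and lie in distinct conjugates of `B`. -/
theorem stmt_15 {G : Type*} [Group G] (B : Subgroup G)
    (habel : ∀ x ∈ B, ∀ y ∈ B, x * y = y * x)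
    (hmal : IsMalnormal B)
    (hcover : ∀ g : G, ∃ h : G, h * g * h⁻¹ ∈ B)
    (x y : G) (hxy : x⁻¹ * y⁻¹ * x * y ≠ 1)
    (K : Subgroup G) (hK : ∃ h : G, K = B.map (MulAut.conj h⁻¹).toMonoidHom)
    (hxK : x ∈ K)
    (b b' : G) (hb : b ∈ K) (hb' : b' ∈ K) (hbb' : b ≠ b') :
    b * y ≠ 1 ∧ b' * y ≠ 1 ∧
      ¬ ∃ h : G, b * y ∈ B.map (MulAut.conj h⁻¹).toMonoidHom ∧
        b' * y ∈ B.map (MulAut.conj h⁻¹).toMonoidHom := by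
  obtain ⟨h, rfl⟩ := hK
  -- K is abelian
  have hKab : ∀ u ∈ B.map (MulAut.conj h⁻¹).toMonoidHom,
      ∀ v ∈ B.map (MulAut.conj h⁻¹).toMonoidHom, u * v = v * u := by
    intro u hu v hv
    rw [mem_conj_aux] at hu hv
    have := habel _ hu _ hv
    have h2 : h * (u * v) * h⁻¹ = h * (v * u) * h⁻¹ := by
      calc h * (u * v) * h⁻¹ = (h * u * h⁻¹) * (h * v * h⁻¹) := by group
        _ = (h * v * h⁻¹) * (h * u * h⁻¹) := this
        _ = h * (v * u) * h⁻¹ := by group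
    have := mul_right_cancel h2
    exact mul_left_cancel this
  -- y is not in K
  have hyK : y ∉ B.map (MulAut.conj h⁻¹).toMonoidHom := by
    intro hy
    apply hxy
    have := hKab x hxK y hy
    rw [show x⁻¹ * y⁻¹ * x * y = x⁻¹ * y⁻¹ * (x * y) by group, this]
    group
  have key : ∀ c : G, c ∈ B.map (MulAut.conj h⁻¹).toMonoidHom → c * y ≠ 1 := by
    intro c hc hcy
    apply hyK
    have : y = c⁻¹ * (c * y) := by group
    rw [this, hcy, mul_one]
    exact inv_mem hc
  refine ⟨key b hb, key b' hb', ?_⟩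
  rintro ⟨g, h1, h2⟩
  rw [mem_conj_aux] at h1 h2
  -- w = b * b'⁻¹ is nontrivial, in K and in g-conjugate
  set w := b * b'⁻¹ with hw
  have hwne : w ≠ 1 := by
    intro hw1
    rw [hw] at hw1
    exact hbb' (mul_inv_eq_one.mp hw1)
  have hwK : h * w * h⁻¹ ∈ B := by
    rw [← mem_conj_aux]
    exact mul_mem hb (inv_mem hb')
  have hwg : g * w * g⁻¹ ∈ B := by
    have : g * w * g⁻¹ = (g * (b * y) * g⁻¹) * (g * (b' * y) * g⁻¹)⁻¹ := by
      rw [hw]; group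
    rw [this]
    exact mul_mem h1 (inv_mem h2)
  -- malnormality: a = g * h⁻¹ ∈ B
  have haB : g * h⁻¹ ∈ B := by
    by_contra haB
    apply hwne
    have hc : (g * h⁻¹) * (h * w * h⁻¹) * (g * h⁻¹)⁻¹ ∈ B := by
      have : (g * h⁻¹) * (h * w * h⁻¹) * (g * h⁻¹)⁻¹ = g * w * g⁻¹ := by group
      rw [this]; exact hwg
    have h3 := hmal _ haB _ hwK hc
    have h4 : w = h⁻¹ * (h * w * h⁻¹) * h := by group
    rw [h4, h3]; group
  -- then b * y ∈ K, so y ∈ K, contradiction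
  apply hyK
  have hbyK : h * (b * y) * h⁻¹ ∈ B := by
    have : h * (b * y) * h⁻¹ = (g * h⁻¹)⁻¹ * (g * (b * y) * g⁻¹) * (g * h⁻¹) := by group
    rw [this]
    exact mul_mem (mul_mem (inv_mem haB) h1) haB
  have hyy : y = b⁻¹ * (b * y) := by group
  rw [hyy]
  exact mul_mem (inv_mem hb) ((mem_conj_aux B h _).mpr hbyK)
end

section
/- Let G be a group and X a nonempty subset of G. Let N = {g ∈ G : gX = X}, and suppose also {g ∈ G : Xg = X} = N. Let S = {(x,y) ∈ G × G : xXy⁻¹ = X}. If the projections of S onto both the first and the second coordinate are all of G, then N is a normal subgroup of G, and there exists a group automorphism σ of G/N such that for all x, y ∈ G, (x,y) ∈ S if and only if σ(xN) = yN. -/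
/-- Let `X` be a nonempty subset of `G`, `N` its left stabilizer (assumed to
coincide with its right stabilizer), and
`S = {(x,y) : x X y⁻¹ = X}`. If the two projections of `S` are all of `G`,
then `N` is normal in `G` and `S` is the graph of an automorphism of `G/N`. -/
theorem stmt_16 {G : Type*} [Group G] (X : Set G) (hX : X.Nonempty)
    (N : Subgroup G)
    (hN : ∀ g : G, g ∈ N ↔ (fun x => g * x) '' X = X)
    (hNright : {g : G | (fun x => x * g) '' X = X} = (N : Set G))
    (S : Set (G × G))
    (hS : S = {p : G × G | (fun z => p.1 * z * p.2⁻¹) '' X = X})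
    (hproj1 : ∀ g : G, ∃ y : G, (g, y) ∈ S)
    (hproj2 : ∀ y : G, ∃ x : G, (x, y) ∈ S) :
    ∃ _hn : N.Normal, ∃ σ : (G ⧸ N) ≃* (G ⧸ N),
      ∀ x y : G, ((x, y) ∈ S ↔ σ (x : G ⧸ N) = (y : G ⧸ N)) := by
  classical
  have memS : ∀ x y : G, (x, y) ∈ S ↔ (fun z => x * z * y⁻¹) '' X = X := by
    intro x y; rw [hS]; rfl
  have inj : ∀ x y : G, Function.Injective (fun z : G => x * z * y⁻¹) := by
    intro x y a b h
    simp only at h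
    exact mul_left_cancel (mul_right_cancel h)
  have Smul : ∀ x y x' y' : G, (x, y) ∈ S → (x', y') ∈ S → (x * x', y * y') ∈ S := by
    intro x y x' y' h h'
    rw [memS] at h h' ⊢
    have e : (fun z : G => (x * x') * z * (y * y')⁻¹) '' X
        = (fun z : G => x * z * y⁻¹) '' ((fun z : G => x' * z * y'⁻¹) '' X) := by
      rw [Set.image_image]
      apply Set.image_congr'
      intro z; group
    rw [e, h', h]
  have Sinv : ∀ x y : G, (x, y) ∈ S → (x⁻¹, y⁻¹) ∈ S := by
    intro x y h
    rw [memS] at h ⊢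
    have h1 : (fun z : G => x * z * y⁻¹) '' ((fun z : G => x⁻¹ * z * (y⁻¹)⁻¹) '' X) = X := by
      rw [Set.image_image]
      have e : (fun z : G => x * (x⁻¹ * z * (y⁻¹)⁻¹) * y⁻¹) = id := by
        funext z; simp [mul_assoc]
      rw [e, Set.image_id]
    exact Set.image_injective.mpr (inj x y) (h1.trans h.symm)
  have SN1 : ∀ g : G, g ∈ N → (g, (1 : G)) ∈ S := by
    intro g hg
    rw [memS]
    simpa using (hN g).mp hg
  have SN2 : ∀ m : G, m ∈ N → ((1 : G), m) ∈ S := by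
    intro m hm
    rw [memS]
    have h2 : m⁻¹ ∈ {g : G | (fun x => x * g) '' X = X} := by
      rw [hNright]; exact inv_mem hm
    simpa using h2
  have NS1 : ∀ g : G, (g, (1 : G)) ∈ S → g ∈ N := by
    intro g hg
    rw [memS] at hg
    rw [hN]
    simpa using hg
  have NS2 : ∀ m : G, ((1 : G), m) ∈ S → m ∈ N := by
    intro m hm
    rw [memS] at hm
    have h2 : m⁻¹ ∈ (N : Set G) := by
      rw [← hNright]; simpa using hm
    simpa using inv_mem h2
  have runiq : ∀ x y y' : G, (x, y) ∈ S → (x, y') ∈ S → (y : G ⧸ N) = y' := by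
    intro x y y' h h'
    have h2 := Smul _ _ _ _ (Sinv _ _ h) h'
    rw [inv_mul_cancel] at h2
    exact (QuotientGroup.eq).mpr (NS2 _ h2)
  have luniq : ∀ x x' y : G, (x, y) ∈ S → (x', y) ∈ S → (x : G ⧸ N) = x' := by
    intro x x' y h h'
    have h2 := Smul _ _ _ _ (Sinv _ _ h) h'
    rw [inv_mul_cancel] at h2
    exact (QuotientGroup.eq).mpr (NS1 _ h2)
  have memo : ∀ x y y' : G, (x, y) ∈ S → (y : G ⧸ N) = y' → (x, y') ∈ S := by
    intro x y y' h he
    have hm : y⁻¹ * y' ∈ N := (QuotientGroup.eq).mp he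
    have h2 := Smul _ _ _ _ h (SN2 _ hm)
    simpa using h2
  have hn : N.Normal := by
    constructor
    intro n hnn g
    obtain ⟨y, hy⟩ := hproj1 g
    have h1 := Smul _ _ _ _ hy (SN1 n hnn)
    have h2 := Smul _ _ _ _ h1 (Sinv _ _ hy)
    apply NS1
    simpa using h2
  set F : G → G := fun x => Classical.choose (hproj1 x) with hFdef
  have hF : ∀ x, (x, F x) ∈ S := fun x => Classical.choose_spec (hproj1 x)
  have keyF : ∀ x y : G, (x, y) ∈ S → (F x : G ⧸ N) = y := fun x y h => runiq x _ y (hF x) h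
  have congrF : ∀ a b : G, (a : G ⧸ N) = b → (F a : G ⧸ N) = F b := by
    intro a b hab
    have hmem : a⁻¹ * b ∈ N := (QuotientGroup.eq).mp hab
    have h1 := Smul _ _ _ _ (hF a) (SN1 _ hmem)
    have h1' : (b, F a) ∈ S := by
      have e : a * (a⁻¹ * b) = b := by group
      simpa [e] using h1
    exact (runiq b _ _ (hF b) h1').symm
  let σfun : G ⧸ N → G ⧸ N := fun q => Quotient.liftOn' q (fun x => ((F x : G ⧸ N)))
    (fun a b h => congrF a b (Quotient.sound' h))
  have hσfun : ∀ x : G, σfun (x : G ⧸ N) = (F x : G ⧸ N) := fun x => rfl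
  have σmul : ∀ a b : G ⧸ N, σfun (a * b) = σfun a * σfun b := by
    intro a b
    obtain ⟨x, rfl⟩ := QuotientGroup.mk_surjective a
    obtain ⟨x', rfl⟩ := QuotientGroup.mk_surjective b
    have e : ((x : G ⧸ N) * (x' : G ⧸ N)) = ((x * x' : G) : G ⧸ N) := rfl
    rw [e, hσfun, hσfun, hσfun]
    have e2 : ((F x : G ⧸ N) * (F x' : G ⧸ N)) = ((F x * F x' : G) : G ⧸ N) := rfl
    rw [e2]
    exact keyF (x * x') (F x * F x') (Smul _ _ _ _ (hF x) (hF x'))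
  have σinj : Function.Injective σfun := by
    intro a b hab
    obtain ⟨x, rfl⟩ := QuotientGroup.mk_surjective a
    obtain ⟨x', rfl⟩ := QuotientGroup.mk_surjective b
    rw [hσfun, hσfun] at hab
    have h1 : (x', F x) ∈ S := memo x' (F x') (F x) (hF x') hab.symm
    exact luniq x x' (F x) (hF x) h1
  have σsurj : Function.Surjective σfun := by
    intro b
    obtain ⟨y, rfl⟩ := QuotientGroup.mk_surjective b
    obtain ⟨x, hx⟩ := hproj2 y
    exact ⟨(x : G ⧸ N), (hσfun x).trans (keyF x y hx)⟩
  refine ⟨hn, MulEquiv.mk' (Equiv.ofBijective σfun ⟨σinj, σsurj⟩) σmul, ?_⟩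
  intro x y
  constructor
  · intro h
    show σfun (x : G ⧸ N) = (y : G ⧸ N)
    rw [hσfun]
    exact keyF x y h
  · intro h
    have h' : (F x : G ⧸ N) = (y : G ⧸ N) := by
      rw [← hσfun]; exact h
    exact memo x (F x) y (hF x) h'
end
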